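/- For the K-armed bandit softmax policy gradient objective f(θ) = r(a*) − ⟨π_θ, r⟩, where π_θ(a) = exp(θ(a))/Σ_{a'} exp(θ(a')), r ∈ [0,1]^K, and a* = argmax_a r(a), it holds for all θ that ‖∇²f(θ)‖_{∞→1} ≤ 6·f(θ). -/

import Mathlib

/-!
The Hessian of `f` at `θ` is `-diag w + w πᵀ + π wᵀ` with `π = softmax θ` and `w = G_θ r`.
As `π` is a probability vector, each of the three terms maps the `ℓ∞` unit ball into the `ℓ¹`
ball of radius `‖w‖₁`, so `‖∇²f(θ)‖_{∞→1} ≤ 3 ‖w‖₁`. Finally `‖w‖₁ = ∑ₐ π a |r a - ⟨π, r⟩|`;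
the deviations `r a - ⟨π, r⟩` have `π`-mean zero, so this is twice their mean positive part,
which is at most `r a* - ⟨π, r⟩ = f θ`.
-/

open scoped BigOperators

noncomputable def lpNorm (p : ENNReal) {ι : Type*} [Fintype ι] (x : ι → ℝ) : ℝ :=
  ‖(WithLp.equiv p (ι → ℝ)).symm x‖

noncomputable def opNorm (p q : ENNReal) {ι κ : Type*} [Fintype ι] [Fintype κ]
    (A : Matrix ι κ ℝ) : ℝ :=
  sSup {c | ∃ x : κ → ℝ, lpNorm p x ≤ 1 ∧ c = lpNorm q (A.mulVec x)}

noncomputable def dotCLM {n : ℕ} (v : Fin n → ℝ) : (Fin n → ℝ) →L[ℝ] ℝ :=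
  LinearMap.toContinuousLinearMap (∑ i, v i • (LinearMap.proj i : (Fin n → ℝ) →ₗ[ℝ] ℝ))

noncomputable def mulVecCLM {m n : ℕ} (M : Matrix (Fin m) (Fin n) ℝ) :
    (Fin n → ℝ) →L[ℝ] (Fin m → ℝ) :=
  LinearMap.toContinuousLinearMap M.mulVecLin

open Finset Matrix

section OpNorm
variable {ι κ : Type*} [Fintype ι] [Fintype κ]

theorem lpNorm_one (y : ι → ℝ) : lpNorm 1 y = ∑ i, |y i| := by
  simp [lpNorm, PiLp.norm_eq_of_L1]

theorem abs_le_lpNorm_top (x : ι → ℝ) (i : ι) : |x i| ≤ lpNorm ⊤ x :=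
  PiLp.norm_apply_le ((WithLp.equiv ⊤ (ι → ℝ)).symm x) i

theorem opNorm_top_one_le {A : Matrix ι κ ℝ} {c : ℝ}
    (h : ∀ x : κ → ℝ, (∀ j, |x j| ≤ 1) → ∑ i, |(A *ᵥ x) i| ≤ c) : opNorm ⊤ 1 A ≤ c := by
  refine csSup_le ⟨_, 0, by simp [lpNorm], rfl⟩ ?_
  rintro _ ⟨x, hx, rfl⟩
  rw [lpNorm_one]
  exact h x fun j => (abs_le_lpNorm_top x j).trans hx

end OpNorm

section Softmax
variable {ι : Type*} [Fintype ι]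

noncomputable def softmax (θ : ι → ℝ) (a : ι) : ℝ := Real.exp (θ a) / ∑ a', Real.exp (θ a')

theorem softmax_nonneg (θ : ι → ℝ) (a : ι) : 0 ≤ softmax θ a := by unfold softmax; positivity

theorem sum_softmax [Nonempty ι] (θ : ι → ℝ) : ∑ a, softmax θ a = 1 := by
  simp only [softmax, ← sum_div]
  exact div_self (sum_pos (fun a _ => Real.exp_pos (θ a)) univ_nonempty).ne'

noncomputable def softmaxJacobian [DecidableEq ι] (θ : ι → ℝ) : Matrix ι ι ℝ :=
  diagonal (softmax θ) - vecMulVec (softmax θ) (softmax θ)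

noncomputable def softmaxHessian [DecidableEq ι] (p w : ι → ℝ) : Matrix ι ι ℝ :=
  vecMulVec w p + vecMulVec p w - diagonal w

theorem softmaxHessian_mulVec_apply [DecidableEq ι] (p w x : ι → ℝ) (a : ι) :
    (softmaxHessian p w *ᵥ x) a = w a * (p ⬝ᵥ x) + p a * (w ⬝ᵥ x) - w a * x a := by
  simp [softmaxHessian, add_mulVec, sub_mulVec, vecMulVec_mulVec, mulVec_diagonal, mul_comm]

theorem softmaxJacobian_mulVec_apply [DecidableEq ι] (θ r : ι → ℝ) (a : ι) :
    (softmaxJacobian θ *ᵥ r) a = softmax θ a * (r a - softmax θ ⬝ᵥ r) := by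
  simp [softmaxJacobian, sub_mulVec, vecMulVec_mulVec, mulVec_diagonal, mul_sub, mul_comm]

theorem softmaxJacobian_transpose [DecidableEq ι] (θ : ι → ℝ) :
    (softmaxJacobian θ)ᵀ = softmaxJacobian θ := by
  simp [softmaxJacobian, transpose_vecMulVec]

end Softmax

section ProbabilityVector
variable {ι : Type*} [Fintype ι]

theorem abs_dotProduct_le_sum_abs {w x : ι → ℝ} (hx : ∀ i, |x i| ≤ 1) :
    |w ⬝ᵥ x| ≤ ∑ i, |w i| :=
  (abs_sum_le_sum_abs _ _).trans <| sum_le_sum fun i _ => by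
    rw [abs_mul]; exact mul_le_of_le_one_right (abs_nonneg _) (hx i)

variable {p : ι → ℝ} (hp : ∀ i, 0 ≤ p i) (hp1 : ∑ i, p i = 1)
include hp hp1

theorem dotProduct_le_of_forall_le {r : ι → ℝ} {M : ℝ} (hr : ∀ a, r a ≤ M) : p ⬝ᵥ r ≤ M :=
  calc p ⬝ᵥ r ≤ ∑ a, p a * M := sum_le_sum fun a _ => mul_le_mul_of_nonneg_left (hr a) (hp a)
    _ = M := by rw [← sum_mul, hp1, one_mul]

theorem abs_dotProduct_le_one {x : ι → ℝ} (hx : ∀ i, |x i| ≤ 1) : |p ⬝ᵥ x| ≤ 1 := by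
  simpa [abs_of_nonneg (hp _), hp1] using abs_dotProduct_le_sum_abs (w := p) hx

theorem sum_mul_abs_sub_dotProduct_le {r : ι → ℝ} {M : ℝ} (hr : ∀ a, r a ≤ M) :
    ∑ a, p a * |r a - p ⬝ᵥ r| ≤ 2 * (M - p ⬝ᵥ r) := by
  set m := p ⬝ᵥ r
  have hcentered : ∑ a, p a * (r a - m) = 0 := by
    simp only [mul_sub, sum_sub_distrib, ← sum_mul, hp1, one_mul, m, dotProduct, sub_self]
  calc ∑ a, p a * |r a - m| = ∑ a, (2 * (p a * max (r a - m) 0) - p a * (r a - m)) := by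
        refine sum_congr rfl fun a _ => ?_
        rcases le_total 0 (r a - m) with h | h
        · rw [abs_of_nonneg h, max_eq_left h]; ring
        · rw [abs_of_nonpos h, max_eq_right h]; ring
    _ = 2 * ∑ a, p a * max (r a - m) 0 := by rw [sum_sub_distrib, hcentered, mul_sum, sub_zero]
    _ ≤ 2 * ∑ a, p a * (M - m) := by
        gcongr with a
        · exact hp a
        · exact max_le (by linarith [hr a]) (sub_nonneg.2 (dotProduct_le_of_forall_le hp hp1 hr))
    _ = 2 * (M - m) := by rw [← sum_mul, hp1, one_mul]

theorem sum_abs_softmaxHessian_mulVec_le [DecidableEq ι] (w : ι → ℝ) {x : ι → ℝ}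
    (hx : ∀ i, |x i| ≤ 1) : ∑ a, |(softmaxHessian p w *ᵥ x) a| ≤ 3 * ∑ a, |w a| := by
  have hpx := abs_dotProduct_le_one hp hp1 hx
  have hwx := abs_dotProduct_le_sum_abs (w := w) hx
  calc ∑ a, |(softmaxHessian p w *ᵥ x) a|
      = ∑ a, |w a * (p ⬝ᵥ x) + p a * (w ⬝ᵥ x) - w a * x a| := by
        simp only [softmaxHessian_mulVec_apply]
    _ ≤ ∑ a, (|w a| + p a * ∑ b, |w b| + |w a|) := by
        gcongr with a
        refine (abs_sub _ _).trans (add_le_add ((abs_add_le _ _).trans (add_le_add ?_ ?_)) ?_)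
        all_goals rw [abs_mul]
        · exact mul_le_of_le_one_right (abs_nonneg _) hpx
        · rw [abs_of_nonneg (hp a)]; exact mul_le_mul_of_nonneg_left hwx (hp a)
        · exact mul_le_of_le_one_right (abs_nonneg _) (hx a)
    _ = 3 * ∑ a, |w a| := by
        rw [sum_add_distrib, sum_add_distrib, ← sum_mul, hp1]; ring

end ProbabilityVector

theorem sum_abs_softmaxJacobian_mulVec_le {ι : Type*} [Fintype ι] [DecidableEq ι] [Nonempty ι]
    (θ : ι → ℝ) {r : ι → ℝ} {M : ℝ} (hr : ∀ a, r a ≤ M) :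
    ∑ a, |(softmaxJacobian θ *ᵥ r) a| ≤ 2 * (M - softmax θ ⬝ᵥ r) := by
  simpa only [softmaxJacobian_mulVec_apply, abs_mul, abs_of_nonneg (softmax_nonneg θ _)] using
    sum_mul_abs_sub_dotProduct_le (softmax_nonneg θ) (sum_softmax θ) hr

theorem dotCLM_apply {n : ℕ} (v x : Fin n → ℝ) : dotCLM v x = v ⬝ᵥ x := by
  simp [dotCLM, dotProduct]

theorem mulVecCLM_apply {m n : ℕ} (M : Matrix (Fin m) (Fin n) ℝ) (x : Fin n → ℝ) :
    mulVecCLM M x = M *ᵥ x := rfl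

theorem dotCLM_neg {n : ℕ} (v : Fin n → ℝ) : dotCLM (-v) = -dotCLM v := by
  ext x; simp [dotCLM_apply]

theorem dotCLM_injective {n : ℕ} : Function.Injective (dotCLM (n := n)) := fun _ _ h => by
  ext a; simpa [dotCLM_apply] using congr($h (Pi.single a 1))

theorem mulVecCLM_injective {m n : ℕ} : Function.Injective (mulVecCLM (m := m) (n := n)) :=
  fun _ _ h => toLin'.injective <| LinearMap.ext fun x => congr($h x)

theorem hasFDerivAt_sum_exp {n : ℕ} (θ : Fin n → ℝ) :
    HasFDerivAt (fun θ : Fin n → ℝ => ∑ b, Real.exp (θ b)) (dotCLM fun b => Real.exp (θ b)) θ := by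
  refine (HasFDerivAt.fun_sum fun b _ => (hasFDerivAt_apply b θ).exp).congr_fderiv ?_
  ext x; simp [dotCLM_apply, dotProduct]

section Calculus
variable {K : ℕ} [NeZero K]

theorem hasFDerivAt_softmax (θ : Fin K → ℝ) :
    HasFDerivAt softmax (mulVecCLM (softmaxJacobian θ)) θ := by
  have hS : ∑ b, Real.exp (θ b) ≠ 0 := (sum_pos (fun b _ => Real.exp_pos (θ b)) univ_nonempty).ne'
  refine hasFDerivAt_pi'.2 fun a => ?_
  have h := (hasFDerivAt_apply a θ).exp.mul ((hasFDerivAt_inv hS).comp θ (hasFDerivAt_sum_exp θ))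
  refine (h.congr_fderiv ?_).congr_of_eventuallyEq (.of_forall fun θ' => ?_)
  · ext x
    simp only [Function.comp_apply, _root_.add_apply, _root_.smul_apply, smul_eq_mul,
      ContinuousLinearMap.comp_apply, ContinuousLinearMap.toSpanSingleton_apply,
      ContinuousLinearMap.proj_apply, dotCLM_apply, mulVecCLM_apply, softmaxJacobian_mulVec_apply,
      softmax, dotProduct, map_sum, mul_neg, sum_neg_distrib, ← sum_mul, div_mul_eq_mul_div,
      ← sum_div]
    field_simp
    ring
  · simp [softmax, div_eq_mul_inv]

theorem hasFDerivAt_softmax_dotProduct (r θ : Fin K → ℝ) :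
    HasFDerivAt (fun θ => softmax θ ⬝ᵥ r) (dotCLM (softmaxJacobian θ *ᵥ r)) θ := by
  have h := (dotCLM r).hasFDerivAt.comp θ (hasFDerivAt_softmax θ)
  refine (h.congr_fderiv ?_).congr_of_eventuallyEq (.of_forall fun θ' => ?_)
  · ext x
    simp [dotCLM_apply, mulVecCLM_apply, dotProduct_mulVec, ← mulVec_transpose,
      softmaxJacobian_transpose]
  · simp [dotCLM_apply, dotProduct_comm]

theorem hasFDerivAt_neg_softmaxJacobian_mulVec (r θ : Fin K → ℝ) :
    HasFDerivAt (fun θ => -(softmaxJacobian θ *ᵥ r))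
      (mulVecCLM (softmaxHessian (softmax θ) (softmaxJacobian θ *ᵥ r))) θ := by
  refine hasFDerivAt_pi'.2 fun a => ?_
  have h := (hasFDerivAt_pi'.1 (hasFDerivAt_softmax θ) a).mul
    ((hasFDerivAt_softmax_dotProduct r θ).sub_const (r a))
  refine (h.congr_fderiv ?_).congr_of_eventuallyEq (.of_forall fun θ' => ?_)
  · ext x
    simp only [_root_.add_apply, _root_.smul_apply, smul_eq_mul,
      ContinuousLinearMap.comp_apply, ContinuousLinearMap.proj_apply, dotCLM_apply,
      mulVecCLM_apply, softmaxJacobian_mulVec_apply, softmaxHessian_mulVec_apply]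
    ring
  · simp only [Pi.neg_apply, softmaxJacobian_mulVec_apply, Pi.mul_apply]
    ring

end Calculus

theorem stmt12_general {K : ℕ} (r : Fin K → ℝ)
    (astar : Fin K) (hastar : ∀ a, r a ≤ r astar)
    (π : (Fin K → ℝ) → Fin K → ℝ)
    (hπ : ∀ θ a, π θ a = Real.exp (θ a) / ∑ a', Real.exp (θ a'))
    (f : (Fin K → ℝ) → ℝ) (hf : ∀ θ, f θ = r astar - ∑ a, π θ a * r a)
    (g : (Fin K → ℝ) → (Fin K → ℝ))
    (Hess : (Fin K → ℝ) → Matrix (Fin K) (Fin K) ℝ)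
    (hgrad : ∀ θ, HasFDerivAt f (dotCLM (g θ)) θ)
    (hhess : ∀ θ, HasFDerivAt g (mulVecCLM (Hess θ)) θ) :
    ∀ θ, opNorm ⊤ 1 (Hess θ) ≤ 6 * f θ := by
  have : NeZero K := ⟨astar.pos.ne'⟩
  obtain rfl : π = softmax := funext₂ hπ
  obtain rfl : f = fun θ => r astar - softmax θ ⬝ᵥ r := funext hf
  obtain rfl : g = fun θ => -(softmaxJacobian θ *ᵥ r) := funext fun θ => dotCLM_injective <|
    (hgrad θ).unique <| by
      simpa only [dotCLM_neg] using (hasFDerivAt_softmax_dotProduct r θ).const_sub (r astar)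
  intro θ
  rw [mulVecCLM_injective <| (hhess θ).unique (hasFDerivAt_neg_softmaxJacobian_mulVec r θ)]
  calc opNorm ⊤ 1 (softmaxHessian (softmax θ) (softmaxJacobian θ *ᵥ r))
      ≤ 3 * ∑ a, |(softmaxJacobian θ *ᵥ r) a| :=
        opNorm_top_one_le fun x hx =>
          sum_abs_softmaxHessian_mulVec_le (softmax_nonneg θ) (sum_softmax θ) _ hx
    _ ≤ 6 * (r astar - softmax θ ⬝ᵥ r) := by
        linarith [sum_abs_softmaxJacobian_mulVec_le θ hastar]

/-- Softmax policy gradient bandit objective: ‖∇²f(θ)‖_{∞→1} ≤ 6 f(θ). -/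
theorem stmt12 {K : ℕ} (hK : 0 < K) (r : Fin K → ℝ) (hr : ∀ a, r a ∈ Set.Icc (0:ℝ) 1)
    (astar : Fin K) (hastar : ∀ a, r a ≤ r astar)
    (π : (Fin K → ℝ) → Fin K → ℝ)
    (hπ : ∀ θ a, π θ a = Real.exp (θ a) / ∑ a', Real.exp (θ a'))
    (f : (Fin K → ℝ) → ℝ) (hf : ∀ θ, f θ = r astar - ∑ a, π θ a * r a)
    (g : (Fin K → ℝ) → (Fin K → ℝ))
    (Hess : (Fin K → ℝ) → Matrix (Fin K) (Fin K) ℝ)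
    (hgrad : ∀ θ, HasFDerivAt f (dotCLM (g θ)) θ)
    (hhess : ∀ θ, HasFDerivAt g (mulVecCLM (Hess θ)) θ) :
    ∀ θ, opNorm ⊤ 1 (Hess θ) ≤ 6 * f θ :=
  stmt12_general r astar hastar π hπ f hf g Hess hgrad hhess
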